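/- arXiv:2301.09880 — 3 statements merged into one kernel-verified Lean document; each statement's English description precedes it below -/
import Mathlib

section
/- Let C be a nonempty closed convex subset of a finite-dimensional real inner product space E, and let Φ : E → ℝ be differentiable with L-Lipschitz gradient. Fix η > 0, s ∈ C and g ∈ E, and set δ = g − ∇Φ(s), p = P_C(s − η·g), Ĝ = (s − p)/η, and G = (s − P_C(s − η·∇Φ(s)))/η. Then Φ(p) ≤ Φ(s) − (η − Lη²/2)·‖Ĝ‖² + η·⟪δ, G⟫ + η·‖δ‖². -/
/-!
The descent lemma bounds `Φ p` by `Φ s + ⟪∇Φ s, p - s⟫ + (L/2)‖p - s‖²`. Write `∇Φ s = g - δ`.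
The variational inequality of the projection at `s - η g`, tested against `s ∈ C`, gives
`‖s - p‖² ≤ η ⟪g, s - p⟫`. The error term splits as `⟪δ, s - p⟫ = ⟪δ, s - q⟫ + ⟪δ, q - p⟫`,
where `q` is the exact projected step; the first summand is `η ⟪δ, G⟫`, and the second is at
most `η ‖δ‖²` because the projection is nonexpansive: `‖p - q‖ ≤ η ‖δ‖`.
-/

open RealInnerProductSpace Set

section MetricProjection

variable {E : Type*} [NormedAddCommGroup E] [InnerProductSpace ℝ E]

theorem Convex.real_inner_sub_sub_nonpos_of_forall_norm_sub_le {C : Set E} (hC : Convex ℝ C)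
    {x p : E} (hp : p ∈ C) (hmin : ∀ c ∈ C, ‖x - p‖ ≤ ‖x - c‖) :
    ∀ c ∈ C, ⟪x - p, c - p⟫ ≤ 0 := by
  have : Nonempty C := ⟨⟨p, hp⟩⟩
  have hbdd : BddBelow (range fun w : C => ‖x - w‖) :=
    ⟨0, by rintro _ ⟨w, rfl⟩; exact norm_nonneg _⟩
  have hinf : ‖x - p‖ = ⨅ w : C, ‖x - w‖ :=
    le_antisymm (le_ciInf fun w => hmin w w.2) (ciInf_le hbdd ⟨p, hp⟩)
  exact (norm_eq_iInf_iff_real_inner_le_zero hC hp).1 hinf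

theorem norm_sub_le_of_real_inner_sub_sub_nonpos {x y p q : E}
    (hp : ⟪x - p, q - p⟫ ≤ 0) (hq : ⟪y - q, p - q⟫ ≤ 0) : ‖p - q‖ ≤ ‖x - y‖ := by
  have firm : ‖p - q‖ ^ 2 ≤ ⟪x - y, p - q⟫ := by
    have : ⟪x - y, p - q⟫ - ‖p - q‖ ^ 2 = -⟪x - p, q - p⟫ - ⟪y - q, p - q⟫ := by
      rw [← real_inner_self_eq_norm_sq]
      simp only [inner_sub_left, inner_sub_right, real_inner_comm p q]
      ring
    linarith
  rcases (norm_nonneg (p - q)).eq_or_lt with h0 | h0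
  · exact h0 ▸ norm_nonneg _
  · nlinarith [real_inner_le_norm (x - y) (p - q)]

end MetricProjection

theorem le_add_deriv_add_of_deriv_sub_le {φ φ' : ℝ → ℝ} {M : ℝ}
    (hφ : ∀ t, HasDerivAt φ (φ' t) t) (hφ' : ∀ t ∈ Ico (0 : ℝ) 1, φ' t ≤ φ' 0 + M * t) :
    φ 1 ≤ φ 0 + φ' 0 + M / 2 := by
  have hB : ∀ t, HasDerivAt (fun t => φ 0 + φ' 0 * t + M / 2 * t ^ 2) (φ' 0 + M * t) t := by
    intro t
    refine ((((hasDerivAt_id' t).const_mul (φ' 0)).const_add (φ 0)).add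
      ((hasDerivAt_pow 2 t).const_mul (M / 2))).congr_deriv ?_
    norm_num; ring
  have := image_le_of_deriv_right_le_deriv_boundary (a := 0) (b := 1)
    (fun t _ => (hφ t).continuousAt.continuousWithinAt)
    (fun t _ => (hφ t).hasDerivWithinAt) (le_of_eq (by simp))
    (fun t _ => (hB t).continuousAt.continuousWithinAt) (fun t _ => (hB t).hasDerivWithinAt)
    hφ' (right_mem_Icc.2 zero_le_one)
  simpa using this

theorem le_add_inner_gradient_add_of_lipschitz_gradient
    {E : Type*} [NormedAddCommGroup E] [InnerProductSpace ℝ E] [CompleteSpace E] {Φ : E → ℝ} {L : ℝ}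
    (hΦ : Differentiable ℝ Φ) (hLip : ∀ x y, ‖gradient Φ x - gradient Φ y‖ ≤ L * ‖x - y‖)
    (x y : E) : Φ y ≤ Φ x + ⟪gradient Φ x, y - x⟫ + L / 2 * ‖y - x‖ ^ 2 := by
  set v := y - x
  have hline : ∀ t : ℝ, HasDerivAt (fun t : ℝ => Φ (x + t • v)) ⟪gradient Φ (x + t • v), v⟫ t :=
    fun t => (hΦ _).hasGradientAt.hasFDerivAt.comp_hasDerivAt t
      (((hasDerivAt_id t).smul_const v).const_add x |>.congr_deriv (one_smul ℝ v))
  have hslope : ∀ t ∈ Ico (0 : ℝ) 1,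
      ⟪gradient Φ (x + t • v), v⟫ ≤ ⟪gradient Φ (x + (0 : ℝ) • v), v⟫ + L * ‖v‖ ^ 2 * t := by
    intro t ht
    rw [zero_smul, add_zero, ← sub_le_iff_le_add', ← inner_sub_left]
    calc ⟪gradient Φ (x + t • v) - gradient Φ x, v⟫
        ≤ ‖gradient Φ (x + t • v) - gradient Φ x‖ * ‖v‖ := real_inner_le_norm _ _
      _ ≤ L * ‖t • v‖ * ‖v‖ := by
        gcongr
        simpa using hLip (x + t • v) x
      _ = L * ‖v‖ ^ 2 * t := by
        rw [norm_smul, Real.norm_of_nonneg ht.1]; ring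
  have := le_add_deriv_add_of_deriv_sub_le hline hslope
  simp only [one_smul, zero_smul, add_zero, v, add_sub_cancel] at this
  linarith

theorem descent_inequality_projected_step_general
    {E : Type*} [NormedAddCommGroup E] [InnerProductSpace ℝ E] [FiniteDimensional ℝ E]
    (C : Set E) (hCco : Convex ℝ C)
    (proj : E → E)
    (hprojC : ∀ x, proj x ∈ C) (hproj : ∀ x, ∀ c ∈ C, ‖x - proj x‖ ≤ ‖x - c‖)
    (Φ : E → ℝ) (L : ℝ) (hΦ : Differentiable ℝ Φ)
    (hLip : ∀ x y, ‖gradient Φ x - gradient Φ y‖ ≤ L * ‖x - y‖)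
    (η : ℝ) (hη : 0 < η) (s : E) (hsC : s ∈ C) (g : E) :
    Φ (proj (s - η • g)) ≤
      Φ s - (η - L * η ^ 2 / 2) * ‖η⁻¹ • (s - proj (s - η • g))‖ ^ 2
        + η * ⟪g - gradient Φ s, η⁻¹ • (s - proj (s - η • gradient Φ s))⟫
        + η * ‖g - gradient Φ s‖ ^ 2 := by
  have hvar := fun x ↦ hCco.real_inner_sub_sub_nonpos_of_forall_norm_sub_le (hprojC x) (hproj x)
  set p := proj (s - η • g)
  set q := proj (s - η • gradient Φ s)
  set δ := g - gradient Φ s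
  have hstep : η⁻¹ * ‖s - p‖ ^ 2 ≤ ⟪g, s - p⟫ := by
    rw [inv_mul_le_iff₀ hη]
    have := hvar (s - η • g) s hsC
    rwa [sub_right_comm, inner_sub_left, real_inner_smul_left, real_inner_self_eq_norm_sq,
      sub_nonpos] at this
  have hpq : ‖p - q‖ ≤ η * ‖δ‖ := by
    have := norm_sub_le_of_real_inner_sub_sub_nonpos (hvar (s - η • g) q (hprojC _))
      (hvar (s - η • gradient Φ s) p (hprojC _))
    rwa [sub_sub_sub_cancel_left, ← smul_sub, norm_smul, Real.norm_of_nonneg hη.le,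
      norm_sub_rev (gradient Φ s)] at this
  have hgrad : ⟪gradient Φ s, p - s⟫ = -⟪g, s - p⟫ + ⟪δ, s - q⟫ + ⟪δ, q - p⟫ := by
    simp only [δ, inner_sub_left, inner_sub_right]; ring
  have herr : ⟪δ, q - p⟫ ≤ η * ‖δ‖ ^ 2 :=
    calc ⟪δ, q - p⟫ ≤ ‖δ‖ * ‖p - q‖ := norm_sub_rev q p ▸ real_inner_le_norm δ (q - p)
      _ ≤ ‖δ‖ * (η * ‖δ‖) := by gcongr
      _ = η * ‖δ‖ ^ 2 := by ring
  calc Φ p ≤ Φ s + ⟪gradient Φ s, p - s⟫ + L / 2 * ‖p - s‖ ^ 2 :=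
        le_add_inner_gradient_add_of_lipschitz_gradient hΦ hLip s p
    _ ≤ Φ s - (η⁻¹ - L / 2) * ‖s - p‖ ^ 2 + ⟪δ, s - q⟫ + η * ‖δ‖ ^ 2 := by
        rw [hgrad, norm_sub_rev]; linarith
    _ = _ := by
        rw [norm_smul, real_inner_smul_right, Real.norm_of_nonneg (inv_nonneg.2 hη.le)]
        field_simp

/-- Descent-type inequality for a single projected step with an inexact gradient `g`:
`Φ(p) ≤ Φ(s) − (η − Lη²/2)‖Ĝ‖² + η⟪δ, G⟫ + η‖δ‖²`, where `δ = g − ∇Φ(s)`,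
`p = P_C(s − η g)`, `Ĝ = (s − p)/η`, `G = (s − P_C(s − η ∇Φ(s)))/η`. -/
theorem descent_inequality_projected_step
    {E : Type*} [NormedAddCommGroup E] [InnerProductSpace ℝ E] [FiniteDimensional ℝ E]
    (C : Set E) (hCne : C.Nonempty) (hCcl : IsClosed C) (hCco : Convex ℝ C)
    (proj : E → E)
    (hprojC : ∀ x, proj x ∈ C) (hproj : ∀ x, ∀ c ∈ C, ‖x - proj x‖ ≤ ‖x - c‖)
    (Φ : E → ℝ) (L : ℝ) (hΦ : Differentiable ℝ Φ)
    (hLip : ∀ x y, ‖gradient Φ x - gradient Φ y‖ ≤ L * ‖x - y‖)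
    (η : ℝ) (hη : 0 < η) (s : E) (hsC : s ∈ C) (g : E) :
    Φ (proj (s - η • g)) ≤
      Φ s - (η - L * η ^ 2 / 2) * ‖η⁻¹ • (s - proj (s - η • g))‖ ^ 2
        + η * ⟪g - gradient Φ s, η⁻¹ • (s - proj (s - η • gradient Φ s))⟫
        + η * ‖g - gradient Φ s‖ ^ 2 :=
  descent_inequality_projected_step_general C hCco proj hprojC hproj Φ L hΦ hLip η hη s hsC g
end

section
/- Let (Ω, ℱ, P) be a probability space with filtration (ℱ_t), let C be a nonempty closed convex subset of a finite-dimensional real inner product space E, and let Φ : E → ℝ be differentiable with L-Lipschitz gradient and bounded below by Φ*. Let 0 < η < 1/L, and let random iterates s^t (ℱ_t-measurable, valued in C) and stochastic gradients g^t (ℱ_{t+1}-measurable, square-integrable) satisfy s^{t+1} = P_C(s^t − η·g^t), E[g^t | ℱ_t] = ∇Φ(s^t) almost surely, and E‖g^t − ∇Φ(s^t)‖² ≤ σ² for t = 1, …, T, where s¹ is deterministic. Define Ĝ^t = (s^t − s^{t+1})/η. Then (1/T)·Σ_{t=1}^{T} E‖Ĝ^t‖² ≤ (Φ(s¹) − Φ*)/(η·(1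 − Lη/2)·T) + σ²/(1 − Lη/2). -/
/-!
Write `δᵗ = gᵗ - ∇Φ(sᵗ)` and `Gᵗ = (sᵗ - P_C(sᵗ - η∇Φ(sᵗ)))/η` for the gradient mapping of the
exact gradient. The variational inequality of `P_C` at `sᵗ ∈ C`, the descent lemma, and the
nonexpansiveness of `P_C` give, pathwise,
`η(1 - Lη/2)‖Ĝᵗ‖² ≤ Φ(sᵗ) - Φ(sᵗ⁺¹) + η(⟪Gᵗ, δᵗ⟫ + ‖δᵗ‖²)`.
Splitting the noise along the exact step `Gᵗ` rather than `Ĝᵗ` is what makes the cross term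
harmless: `Gᵗ` is `ℱₜ`-measurable, so `E⟪Gᵗ, δᵗ⟫ = 0`. Summing, telescoping against `Φ ≥ Φ*`
and taking expectations gives `η(1 - Lη/2) Σₜ E‖Ĝᵗ‖² ≤ Φ(s¹) - Φ* + ηTσ²`.
-/

open MeasureTheory RealInnerProductSpace

theorem Finset.sum_Icc_one_sub' {M : Type*} [AddCommGroup M] (f : ℕ → M) (n : ℕ) :
    ∑ t ∈ Finset.Icc 1 n, (f t - f (t + 1)) = f 1 - f (n + 1) := by
  induction n with
  | zero => simp
  | succ n ih => rw [Finset.sum_Icc_succ_top (by omega), ih]; abel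

section Projection

variable {E : Type*} [NormedAddCommGroup E] {C : Set E} {proj : E → E}

theorem proj_eq_self_of_mem (hproj : ∀ x, ∀ c ∈ C, ‖x - proj x‖ ≤ ‖x - c‖) {c : E}
    (hc : c ∈ C) : proj c = c := by
  have h := hproj c c hc
  rw [sub_self, norm_zero, norm_le_zero_iff, sub_eq_zero] at h
  exact h.symm

variable [InnerProductSpace ℝ E]

theorem real_inner_sub_proj_le_zero (hCco : Convex ℝ C) (hprojC : ∀ x, proj x ∈ C)
    (hproj : ∀ x, ∀ c ∈ C, ‖x - proj x‖ ≤ ‖x - c‖) (x : E) {c : E} (hc : c ∈ C) :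
    ⟪x - proj x, c - proj x⟫ ≤ 0 := by
  have : Nonempty C := ⟨⟨proj x, hprojC x⟩⟩
  refine (norm_eq_iInf_iff_real_inner_le_zero hCco (hprojC x)).mp ?_ c hc
  refine le_antisymm (le_ciInf fun w => hproj x w w.2) ?_
  exact ciInf_le ⟨0, Set.forall_mem_range.2 fun _ => norm_nonneg _⟩ (⟨proj x, hprojC x⟩ : C)

theorem norm_proj_sub_proj_le (hCco : Convex ℝ C) (hprojC : ∀ x, proj x ∈ C)
    (hproj : ∀ x, ∀ c ∈ C, ‖x - proj x‖ ≤ ‖x - c‖) (a b : E) :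
    ‖proj a - proj b‖ ≤ ‖a - b‖ := by
  have ha := real_inner_sub_proj_le_zero hCco hprojC hproj a (hprojC b)
  have hb := real_inner_sub_proj_le_zero hCco hprojC hproj b (hprojC a)
  have hsq : ‖proj a - proj b‖ ^ 2 ≤ ‖a - b‖ * ‖proj a - proj b‖ := by
    have : ⟪a - b, proj a - proj b⟫ - ‖proj a - proj b‖ ^ 2
        = -⟪a - proj a, proj b - proj a⟫ - ⟪b - proj b, proj a - proj b⟫ := by
      rw [← real_inner_self_eq_norm_sq]
      simp only [inner_sub_left, inner_sub_right]
      ring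
    linarith [real_inner_le_norm (a - b) (proj a - proj b)]
  nlinarith [norm_nonneg (a - b), norm_nonneg (proj a - proj b)]

theorem lipschitzWith_one_proj (hCco : Convex ℝ C) (hprojC : ∀ x, proj x ∈ C)
    (hproj : ∀ x, ∀ c ∈ C, ‖x - proj x‖ ≤ ‖x - c‖) : LipschitzWith 1 proj :=
  LipschitzWith.of_dist_le_mul fun a b => by
    simpa [dist_eq_norm] using norm_proj_sub_proj_le hCco hprojC hproj a b

end Projection

section Descent

variable {E : Type*} [NormedAddCommGroup E] [InnerProductSpace ℝ E] [CompleteSpace E]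

theorem descent_lemma {Φ : E → ℝ} {L : ℝ} (hΦ : Differentiable ℝ Φ)
    (hLip : ∀ x y, ‖gradient Φ x - gradient Φ y‖ ≤ L * ‖x - y‖) (x y : E) :
    Φ y ≤ Φ x + ⟪gradient Φ x, y - x⟫ + L / 2 * ‖y - x‖ ^ 2 := by
  set v := y - x
  let f : ℝ → ℝ := fun τ => Φ (x + τ • v) - τ * ⟪gradient Φ x, v⟫ - L / 2 * τ ^ 2 * ‖v‖ ^ 2
  have hf : ∀ τ, HasDerivAt f
      (⟪gradient Φ (x + τ • v) - gradient Φ x, v⟫ - L * τ * ‖v‖ ^ 2) τ := by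
    intro τ
    have hline : HasDerivAt (fun τ : ℝ => x + τ • v) v τ := by
      simpa using ((hasDerivAt_id τ).smul_const v).const_add x
    have hΦline := (hΦ (x + τ • v)).hasFDerivAt.comp_hasDerivAt τ hline
    rw [← inner_gradient_left] at hΦline
    refine ((hΦline.sub ((hasDerivAt_id τ).mul_const _)).sub
      (((hasDerivAt_pow 2 τ).const_mul (L / 2)).mul_const (‖v‖ ^ 2))).congr_deriv ?_
    rw [inner_sub_left]
    push_cast [Nat.add_one_sub_one, pow_one]
    ring
  have hanti : AntitoneOn f (Set.Ici 0) := by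
    refine antitoneOn_of_deriv_nonpos (convex_Ici 0)
      (fun τ _ => (hf τ).continuousAt.continuousWithinAt)
      (fun τ _ => (hf τ).differentiableAt.differentiableWithinAt) fun τ hτ => ?_
    rw [interior_Ici, Set.mem_Ioi] at hτ
    have hnorm : ‖gradient Φ (x + τ • v) - gradient Φ x‖ ≤ L * (τ * ‖v‖) := by
      simpa [norm_smul, abs_of_pos hτ] using hLip (x + τ • v) x
    rw [(hf τ).deriv]
    nlinarith [real_inner_le_norm (gradient Φ (x + τ • v) - gradient Φ x) v, norm_nonneg v,
      mul_le_mul_of_nonneg_right hnorm (norm_nonneg v)]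
  have h10 := hanti (Set.mem_Ici.2 le_rfl) (Set.mem_Ici.2 zero_le_one) zero_le_one
  simp only [f, one_smul, zero_smul, add_zero, one_mul, one_pow, zero_mul, zero_pow two_ne_zero,
    mul_zero, sub_zero, add_sub_cancel, v] at h10
  linarith

end Descent

section Expectation

variable {Ω : Type*} {m mΩ : MeasurableSpace Ω} {μ : Measure Ω}

theorem MeasureTheory.MemLp.integrable_inner {E : Type*} [NormedAddCommGroup E]
    [InnerProductSpace ℝ E] {X Y : Ω → E} (hX : MemLp X 2 μ) (hY : MemLp Y 2 μ) :
    Integrable (fun ω => ⟪X ω, Y ω⟫) μ :=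
  memLp_one_iff_integrable.1 <| hX.of_bilin (fun a b => ⟪a, b⟫) 1 hY
    (hX.1.inner hY.1) (ae_of_all _ fun ω => by simpa using nnnorm_inner_le_nnnorm (X ω) (Y ω))

theorem integral_inner_sub_eq_zero_of_condExp_ae_eq {E : Type*} [NormedAddCommGroup E]
    [InnerProductSpace ℝ E] [CompleteSpace E] [IsFiniteMeasure μ] (hm : m ≤ mΩ)
    {X Y Z : Ω → E} (hX : StronglyMeasurable[m] X) (hX2 : MemLp X 2 μ) (hY : MemLp Y 2 μ)
    (hYZ : μ[Y|m] =ᵐ[μ] Z) : ∫ ω, ⟪X ω, Y ω - Z ω⟫ ∂μ = 0 := by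
  have hZ : MemLp Z 2 μ := (hY.condExp one_le_two).ae_eq hYZ
  have hXY := hX2.integrable_inner hY
  have hpull : μ[fun ω => ⟪X ω, Y ω⟫|m] =ᵐ[μ] fun ω => ⟪X ω, Z ω⟫ := by
    filter_upwards [condExp_bilin_of_stronglyMeasurable_left (innerSL ℝ) hX hXY
      (hY.integrable one_le_two), hYZ] with ω hω hωZ
    rw [← hωZ]
    exact hω
  simp_rw [inner_sub_right]
  rw [integral_sub hXY (hX2.integrable_inner hZ), ← integral_condExp hm, integral_congr_ae hpull,
    sub_self]

theorem sum_integral_le_of_forall_sum_le [IsProbabilityMeasure μ] {ι : Type*} (s : Finset ι)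
    {X Y : ι → Ω → ℝ} {c : ℝ} (h : ∀ ω, ∑ i ∈ s, X i ω ≤ c + ∑ i ∈ s, Y i ω)
    (hX : ∀ i ∈ s, Integrable (X i) μ) (hY : ∀ i ∈ s, Integrable (Y i) μ) :
    ∑ i ∈ s, ∫ ω, X i ω ∂μ ≤ c + ∑ i ∈ s, ∫ ω, Y i ω ∂μ := by
  have hY' : Integrable (fun ω => c + ∑ i ∈ s, Y i ω) μ :=
    (integrable_const c).add (integrable_finsetSum s hY)
  have hmono := integral_mono (integrable_finsetSum s hX) hY' h
  rwa [integral_add (integrable_const c) (integrable_finsetSum s hY), integral_const,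
    probReal_univ, one_smul, integral_finsetSum s hX, integral_finsetSum s hY] at hmono

end Expectation

section GradientMapping

variable {E : Type*} [NormedAddCommGroup E] [InnerProductSpace ℝ E] {C : Set E} {proj : E → E}
  {η : ℝ}

noncomputable def gradientMapping (proj : E → E) (η : ℝ) (x v : E) : E :=
  η⁻¹ • (x - proj (x - η • v))

theorem norm_gradientMapping_le (hCco : Convex ℝ C) (hprojC : ∀ x, proj x ∈ C)
    (hproj : ∀ x, ∀ c ∈ C, ‖x - proj x‖ ≤ ‖x - c‖) (hη : 0 < η) {x : E} (hx : x ∈ C) (v : E) :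
    ‖gradientMapping proj η x v‖ ≤ ‖v‖ := by
  have h := norm_proj_sub_proj_le hCco hprojC hproj x (x - η • v)
  rw [proj_eq_self_of_mem hproj hx, sub_sub_cancel, norm_smul, Real.norm_of_nonneg hη.le] at h
  rw [gradientMapping, norm_smul, norm_inv, Real.norm_of_nonneg hη.le]
  exact inv_mul_le_of_le_mul₀ hη.le (norm_nonneg v) h

theorem continuous_gradientMapping (hCco : Convex ℝ C) (hprojC : ∀ x, proj x ∈ C)
    (hproj : ∀ x, ∀ c ∈ C, ‖x - proj x‖ ≤ ‖x - c‖) :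
    Continuous fun p : E × E => gradientMapping proj η p.1 p.2 := by
  have := (lipschitzWith_one_proj hCco hprojC hproj).continuous
  unfold gradientMapping
  fun_prop

theorem MeasureTheory.MemLp.gradientMapping {Ω : Type*} {mΩ : MeasurableSpace Ω}
    {μ : Measure Ω} {p : ENNReal} (hCco : Convex ℝ C) (hprojC : ∀ x, proj x ∈ C)
    (hproj : ∀ x, ∀ c ∈ C, ‖x - proj x‖ ≤ ‖x - c‖) (hη : 0 < η) {X v : Ω → E}
    (hX : AEStronglyMeasurable X μ) (hXC : ∀ ω, X ω ∈ C) (hv : MemLp v p μ) :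
    MemLp (fun ω => gradientMapping proj η (X ω) (v ω)) p μ :=
  hv.of_le ((continuous_gradientMapping hCco hprojC hproj).comp_aestronglyMeasurable₂ hX hv.1)
    (ae_of_all _ fun ω => norm_gradientMapping_le hCco hprojC hproj hη (hXC ω) (v ω))

variable [CompleteSpace E] {Φ : E → ℝ} {L : ℝ}

theorem projected_step_le (hCco : Convex ℝ C) (hprojC : ∀ x, proj x ∈ C)
    (hproj : ∀ x, ∀ c ∈ C, ‖x - proj x‖ ≤ ‖x - c‖) (hΦ : Differentiable ℝ Φ)
    (hLip : ∀ x y, ‖gradient Φ x - gradient Φ y‖ ≤ L * ‖x - y‖) (hη : 0 < η) {x : E}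
    (hx : x ∈ C) (g : E) :
    η * (1 - L * η / 2) * ‖gradientMapping proj η x g‖ ^ 2
      ≤ Φ x - Φ (proj (x - η • g))
        + η * (⟪gradientMapping proj η x (gradient Φ x), g - gradient Φ x⟫
          + ‖g - gradient Φ x‖ ^ 2) := by
  rw [gradientMapping, gradientMapping]
  set x' := proj (x - η • g)
  set p := proj (x - η • gradient Φ x)
  set δ := g - gradient Φ x
  have hvar : η⁻¹ * ‖x - x'‖ ^ 2 ≤ ⟪g, x - x'⟫ := by
    have h := real_inner_sub_proj_le_zero hCco hprojC hproj (x - η • g) hx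
    rw [sub_right_comm, inner_sub_left, real_inner_smul_left, real_inner_self_eq_norm_sq] at h
    rw [inv_mul_le_iff₀ hη]
    linarith
  have hdesc : Φ x' ≤ Φ x - ⟪gradient Φ x, x - x'⟫ + L / 2 * ‖x - x'‖ ^ 2 := by
    have h := descent_lemma hΦ hLip x x'
    rwa [← neg_sub x x', inner_neg_right, norm_neg, ← sub_eq_add_neg] at h
  have hnoise : ⟪δ, p - x'⟫ ≤ η * ‖δ‖ ^ 2 := by
    have h := norm_proj_sub_proj_le hCco hprojC hproj (x - η • gradient Φ x) (x - η • g)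
    rw [sub_sub_sub_cancel_left, ← smul_sub, norm_smul, Real.norm_of_nonneg hη.le] at h
    nlinarith [real_inner_le_norm δ (p - x'), norm_nonneg δ]
  have hsplit : ⟪gradient Φ x, x - x'⟫ = ⟪g, x - x'⟫ - ⟪δ, x - p⟫ - ⟪δ, p - x'⟫ := by
    rw [sub_sub, ← inner_add_right, sub_add_sub_cancel, ← inner_sub_left, sub_sub_cancel]
  have hlhs : η * (1 - L * η / 2) * ‖η⁻¹ • (x - x')‖ ^ 2
      = η⁻¹ * ‖x - x'‖ ^ 2 - L / 2 * ‖x - x'‖ ^ 2 := by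
    rw [norm_smul, norm_inv, Real.norm_of_nonneg hη.le]
    field_simp
  have hrhs : η * (⟪η⁻¹ • (x - p), δ⟫ + ‖δ‖ ^ 2) = ⟪δ, x - p⟫ + η * ‖δ‖ ^ 2 := by
    rw [real_inner_smul_left, real_inner_comm]
    field_simp
  rw [hlhs, hrhs]
  linarith

theorem sum_projected_steps_le (hCco : Convex ℝ C) (hprojC : ∀ x, proj x ∈ C)
    (hproj : ∀ x, ∀ c ∈ C, ‖x - proj x‖ ≤ ‖x - c‖) (hΦ : Differentiable ℝ Φ)
    (hLip : ∀ x y, ‖gradient Φ x - gradient Φ y‖ ≤ L * ‖x - y‖) (hη : 0 < η) {Φstar : ℝ}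
    (hbdd : ∀ x, Φstar ≤ Φ x) {T : ℕ} {x g : ℕ → E} (hxC : ∀ t, x t ∈ C)
    (hx : ∀ t ∈ Finset.Icc 1 T, x (t + 1) = proj (x t - η • g t)) :
    ∑ t ∈ Finset.Icc 1 T, η * (1 - L * η / 2) * ‖η⁻¹ • (x t - x (t + 1))‖ ^ 2
      ≤ Φ (x 1) - Φstar + ∑ t ∈ Finset.Icc 1 T,
        η * (⟪gradientMapping proj η (x t) (gradient Φ (x t)), g t - gradient Φ (x t)⟫
          + ‖g t - gradient Φ (x t)‖ ^ 2) := by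
  have hsum := Finset.sum_le_sum fun t ht => show
      η * (1 - L * η / 2) * ‖η⁻¹ • (x t - x (t + 1))‖ ^ 2 ≤ Φ (x t) - Φ (x (t + 1))
        + η * (⟪gradientMapping proj η (x t) (gradient Φ (x t)), g t - gradient Φ (x t)⟫
          + ‖g t - gradient Φ (x t)‖ ^ 2) by
    rw [hx t ht]
    exact projected_step_le hCco hprojC hproj hΦ hLip hη (hxC t) (g t)
  rw [Finset.sum_add_distrib, Finset.sum_Icc_one_sub' (fun t => Φ (x t))] at hsum
  linarith [hbdd (x (T + 1))]

theorem integrable_and_integral_inner_gradientMapping_add_norm_sq {Ω : Type*}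
    {m mΩ : MeasurableSpace Ω} {μ : Measure Ω} [IsFiniteMeasure μ] (hm : m ≤ mΩ) (hCco : Convex ℝ C)
    (hprojC : ∀ x, proj x ∈ C) (hproj : ∀ x, ∀ c ∈ C, ‖x - proj x‖ ≤ ‖x - c‖)
    (hLip : ∀ x y, ‖gradient Φ x - gradient Φ y‖ ≤ L * ‖x - y‖) (hη : 0 < η) {X g : Ω → E}
    (hX : StronglyMeasurable[m] X) (hXC : ∀ ω, X ω ∈ C) (hg : MemLp g 2 μ)
    (hcond : μ[g|m] =ᵐ[μ] fun ω => gradient Φ (X ω)) :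
    Integrable (fun ω => ⟪gradientMapping proj η (X ω) (gradient Φ (X ω)), g ω - gradient Φ (X ω)⟫
      + ‖g ω - gradient Φ (X ω)‖ ^ 2) μ ∧
    ∫ ω, (⟪gradientMapping proj η (X ω) (gradient Φ (X ω)), g ω - gradient Φ (X ω)⟫
      + ‖g ω - gradient Φ (X ω)‖ ^ 2) ∂μ = ∫ ω, ‖g ω - gradient Φ (X ω)‖ ^ 2 ∂μ := by
  have hgradX : StronglyMeasurable[m] fun ω => gradient Φ (X ω) :=
    (LipschitzWith.of_dist_le' (f := gradient Φ) fun x y => by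
      simpa [dist_eq_norm] using hLip x y).continuous.comp_stronglyMeasurable hX
  have hGX : StronglyMeasurable[m] fun ω => gradientMapping proj η (X ω) (gradient Φ (X ω)) :=
    (continuous_gradientMapping hCco hprojC hproj).comp_stronglyMeasurable (hX.prodMk hgradX)
  have hgrad2 : MemLp (fun ω => gradient Φ (X ω)) 2 μ := (hg.condExp one_le_two).ae_eq hcond
  have hG2 : MemLp (fun ω => gradientMapping proj η (X ω) (gradient Φ (X ω))) 2 μ :=
    hgrad2.gradientMapping hCco hprojC hproj hη (hX.mono hm).aestronglyMeasurable hXC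
  have hδ : MemLp (fun ω => g ω - gradient Φ (X ω)) 2 μ := hg.sub hgrad2
  have hcross := integral_inner_sub_eq_zero_of_condExp_ae_eq hm hGX hG2 hg hcond
  refine ⟨(hG2.integrable_inner hδ).add hδ.norm.integrable_sq, ?_⟩
  rw [integral_add (hG2.integrable_inner hδ) hδ.norm.integrable_sq, hcross, zero_add]

end GradientMapping

theorem one_div_mul_le_div_add_div {η B D S v : ℝ} {T : ℕ} (hη : 0 < η) (hB : 0 < B)
    (hv : 0 ≤ v) (h : η * B * S ≤ D + η * (T * v)) :
    1 / (T : ℝ) * S ≤ D / (η * B * T) + v / B := by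
  rcases T.eq_zero_or_pos with rfl | hT
  · simpa using div_nonneg hv hB.le
  calc _ ≤ 1 / (T : ℝ) * ((D + η * (T * v)) / (η * B)) := by
        gcongr
        rwa [le_div_iff₀' (mul_pos hη hB)]
    _ = _ := by field_simp

theorem psgd_expected_gradient_mapping_bound_general
    {E : Type*} [NormedAddCommGroup E] [InnerProductSpace ℝ E] [FiniteDimensional ℝ E]
    {Ω : Type*} {mΩ : MeasurableSpace Ω} (P : Measure Ω) [IsProbabilityMeasure P]
    (ℱ : Filtration ℕ mΩ)
    (C : Set E) (hCco : Convex ℝ C)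
    (proj : E → E)
    (hprojC : ∀ x, proj x ∈ C) (hproj : ∀ x, ∀ c ∈ C, ‖x - proj x‖ ≤ ‖x - c‖)
    (Φ : E → ℝ) (L Φstar : ℝ) (hΦ : Differentiable ℝ Φ)
    (hLip : ∀ x y, ‖gradient Φ x - gradient Φ y‖ ≤ L * ‖x - y‖)
    (hbdd : ∀ x, Φstar ≤ Φ x)
    (η : ℝ) (hη0 : 0 < η) (hηL : η < 1 / L)
    (σ : ℝ) (T : ℕ)
    (s g : ℕ → Ω → E)
    (hsmeas : ∀ t, StronglyMeasurable[ℱ t] (s t))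
    (hsC : ∀ t ω, s t ω ∈ C)
    (hgL2 : ∀ t, MemLp (g t) 2 P)
    (hupdate : ∀ t ∈ Finset.Icc 1 T, ∀ ω, s (t + 1) ω = proj (s t ω - η • g t ω))
    (hcond : ∀ t ∈ Finset.Icc 1 T, P[g t|ℱ t] =ᵐ[P] fun ω => gradient Φ (s t ω))
    (hvar : ∀ t ∈ Finset.Icc 1 T, ∫ ω, ‖g t ω - gradient Φ (s t ω)‖ ^ 2 ∂P ≤ σ ^ 2)
    (s₁ : E) (hs1 : ∀ ω, s 1 ω = s₁) :
    (1 / (T : ℝ)) * ∑ t ∈ Finset.Icc 1 T, ∫ ω, ‖η⁻¹ • (s t ω - s (t + 1) ω)‖ ^ 2 ∂P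
      ≤ (Φ s₁ - Φstar) / (η * (1 - L * η / 2) * T) + σ ^ 2 / (1 - L * η / 2) := by
  have hB : 0 < 1 - L * η / 2 := by
    have := (lt_div_iff₀ (one_div_pos.mp (hη0.trans hηL))).mp hηL
    nlinarith
  have hpath := fun ω => hs1 ω ▸ sum_projected_steps_le hCco hprojC hproj hΦ hLip hη0 hbdd
    (x := fun t => s t ω) (hsC · ω) fun t ht => hupdate t ht ω
  have hsm : ∀ t, AEStronglyMeasurable (s t) P :=
    fun t => ((hsmeas t).mono (ℱ.le t)).aestronglyMeasurable
  have hGhat : ∀ t ∈ Finset.Icc 1 T, MemLp (fun ω => η⁻¹ • (s t ω - s (t + 1) ω)) 2 P := by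
    intro t ht
    simp_rw [hupdate t ht]
    exact (hgL2 t).gradientMapping hCco hprojC hproj hη0 (hsm t) (hsC t)
  have hnoise := fun t (ht : t ∈ Finset.Icc 1 T) =>
    integrable_and_integral_inner_gradientMapping_add_norm_sq (ℱ.le t) hCco hprojC hproj hLip hη0
      (hsmeas t) (hsC t) (hgL2 t) (hcond t ht)
  have hmean := (sum_integral_le_of_forall_sum_le (Finset.Icc 1 T) hpath
    (fun t ht => (hGhat t ht).norm.integrable_sq.const_mul _)
    (fun t ht => (hnoise t ht).1.const_mul η)).trans
    (add_le_add_right (Finset.sum_le_sum fun t ht => show _ ≤ η * σ ^ 2 by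
      rw [integral_const_mul, (hnoise t ht).2]
      exact mul_le_mul_of_nonneg_left (hvar t ht) hη0.le) _)
  simp only [integral_const_mul, ← Finset.mul_sum, Finset.sum_const, Nat.card_Icc,
    add_tsub_cancel_right, nsmul_eq_mul] at hmean
  exact one_div_mul_le_div_add_div hη0 hB (sq_nonneg σ) hmean

/-- Convergence bound for projected stochastic gradient descent:
`(1/T) Σ_{t=1}^{T} E‖Ĝ^t‖² ≤ (Φ(s¹) − Φ*)/(η(1 − Lη/2)T) + σ²/(1 − Lη/2)`,
where `Ĝ^t = (s^t − s^{t+1})/η`. -/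
theorem psgd_expected_gradient_mapping_bound
    {E : Type*} [NormedAddCommGroup E] [InnerProductSpace ℝ E] [FiniteDimensional ℝ E]
    {Ω : Type*} {mΩ : MeasurableSpace Ω} (P : Measure Ω) [IsProbabilityMeasure P]
    (ℱ : Filtration ℕ mΩ)
    (C : Set E) (hCne : C.Nonempty) (hCcl : IsClosed C) (hCco : Convex ℝ C)
    (proj : E → E)
    (hprojC : ∀ x, proj x ∈ C) (hproj : ∀ x, ∀ c ∈ C, ‖x - proj x‖ ≤ ‖x - c‖)
    (Φ : E → ℝ) (L Φstar : ℝ) (hΦ : Differentiable ℝ Φ)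
    (hLip : ∀ x y, ‖gradient Φ x - gradient Φ y‖ ≤ L * ‖x - y‖)
    (hbdd : ∀ x, Φstar ≤ Φ x)
    (η : ℝ) (hL : 0 < L) (hη0 : 0 < η) (hηL : η < 1 / L)
    (σ : ℝ) (T : ℕ) (hT : 1 ≤ T)
    (s g : ℕ → Ω → E)
    (hsmeas : ∀ t, StronglyMeasurable[ℱ t] (s t))
    (hsC : ∀ t ω, s t ω ∈ C)
    (hgmeas : ∀ t, StronglyMeasurable[ℱ (t + 1)] (g t))
    (hgL2 : ∀ t, MemLp (g t) 2 P)
    (hupdate : ∀ t ∈ Finset.Icc 1 T, ∀ ω, s (t + 1) ω = proj (s t ω - η • g t ω))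
    (hcond : ∀ t ∈ Finset.Icc 1 T, P[g t|ℱ t] =ᵐ[P] fun ω => gradient Φ (s t ω))
    (hvar : ∀ t ∈ Finset.Icc 1 T, ∫ ω, ‖g t ω - gradient Φ (s t ω)‖ ^ 2 ∂P ≤ σ ^ 2)
    (s₁ : E) (hs1 : ∀ ω, s 1 ω = s₁) :
    (1 / (T : ℝ)) * ∑ t ∈ Finset.Icc 1 T, ∫ ω, ‖η⁻¹ • (s t ω - s (t + 1) ω)‖ ^ 2 ∂P
      ≤ (Φ s₁ - Φstar) / (η * (1 - L * η / 2) * T) + σ ^ 2 / (1 - L * η / 2) :=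
  psgd_expected_gradient_mapping_bound_general P ℱ C hCco proj hprojC hproj Φ L Φstar hΦ hLip hbdd η
    hη0 hηL σ T s g hsmeas hsC hgL2 hupdate hcond hvar s₁ hs1
end

section
/- Fix n, K > 0, and z ∈ ℝ^n. Let C_K = {s ∈ ℝ^n : 0 ≤ s_i ≤ 1 for all i, Σ_i s_i ≤ K}, and suppose v* ≥ 0 satisfies either (v* = 0 and Σ_i min(1, max(0, z_i)) ≤ K) or Σ_i min(1, max(0, z_i − v*)) = K. Then the vector s* with coordinates s*_i = min(1, max(0, z_i − v*)) is the Euclidean projection of z onto C_K: s* ∈ C_K and ‖z − s*‖ ≤ ‖z − c‖ for every c ∈ C_K. -/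
/-!
The clipped vector `s*` is the coordinatewise projection of `z - v*·𝟙` onto the unit cube,
so coordinatewise `(z_i - s*_i)(c_i - s*_i) ≤ v*(c_i - s*_i)` for every `c` in the cube.
Summing, `⟪z - s*, c - s*⟫ ≤ v*(Σ c_i - Σ s*_i) ≤ 0` for every `c ∈ C_K`, because either
`v* = 0` or the budget constraint is tight at `s*`; this variational inequality characterises
the projection onto a convex set.
-/

open Finset

theorem norm_sub_le_norm_sub_of_inner_nonpos {E : Type*} [NormedAddCommGroup E]
    [InnerProductSpace ℝ E] {x s c : E} (h : inner ℝ (x - s) (c - s) ≤ 0) :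
    ‖x - s‖ ≤ ‖x - c‖ := by
  have hsq : ‖x - c‖ ^ 2 = ‖x - s‖ ^ 2 - 2 * inner ℝ (x - s) (c - s) + ‖c - s‖ ^ 2 := by
    rw [← norm_sub_sq_real, sub_sub_sub_cancel_right]
  exact (sq_le_sq₀ (norm_nonneg _) (norm_nonneg _)).1 (by nlinarith [sq_nonneg ‖c - s‖])

theorem sub_clip_mul_sub_clip_nonpos {y c : ℝ} (hc₀ : 0 ≤ c) (hc₁ : c ≤ 1) :
    (y - min 1 (max 0 y)) * (c - min 1 (max 0 y)) ≤ 0 := by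
  rcases le_total y 0 with h | h
  · rw [max_eq_left h, min_eq_right zero_le_one]
    nlinarith
  rcases le_total y 1 with h₁ | h₁
  · simp [max_eq_right h, min_eq_right h₁]
  · rw [max_eq_right h, min_eq_left h₁]
    nlinarith

theorem sum_sub_clip_mul_sub_clip_le {ι : Type*} [Fintype ι] (z c : ι → ℝ) {v : ℝ}
    (hc : ∀ i, 0 ≤ c i ∧ c i ≤ 1) :
    ∑ i, (z i - min 1 (max 0 (z i - v))) * (c i - min 1 (max 0 (z i - v)))
      ≤ v * (∑ i, c i - ∑ i, min 1 (max 0 (z i - v))) := by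
  rw [← sum_sub_distrib, mul_sum]
  refine sum_le_sum fun i _ => ?_
  linarith [sub_clip_mul_sub_clip_nonpos (y := z i - v) (hc i).1 (hc i).2]

theorem projection_onto_capped_simplex_general
    (n : ℕ) (K : ℝ) (z : EuclideanSpace ℝ (Fin n)) (v : ℝ) (hv : 0 ≤ v)
    (hopt : (v = 0 ∧ ∑ i, min 1 (max 0 (z i)) ≤ K)
        ∨ ∑ i, min 1 (max 0 (z i - v)) = K)
    (sstar : EuclideanSpace ℝ (Fin n))
    (hsstar : ∀ i, sstar i = min 1 (max 0 (z i - v))) :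
    (sstar ∈ {s : EuclideanSpace ℝ (Fin n) | (∀ i, 0 ≤ s i ∧ s i ≤ 1) ∧ ∑ i, s i ≤ K}) ∧
      ∀ c ∈ {s : EuclideanSpace ℝ (Fin n) | (∀ i, 0 ≤ s i ∧ s i ≤ 1) ∧ ∑ i, s i ≤ K},
        ‖z - sstar‖ ≤ ‖z - c‖ := by
  have hsum : ∑ i, sstar i ≤ K := by
    simp only [hsstar]
    rcases hopt with ⟨rfl, hle⟩ | heq
    · simpa using hle
    · exact heq.le
  refine ⟨⟨fun i => ?_, hsum⟩, fun c ⟨hc, hcK⟩ => norm_sub_le_norm_sub_of_inner_nonpos ?_⟩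
  · rw [hsstar i]
    exact ⟨le_min zero_le_one (le_max_left _ _), min_le_left _ _⟩
  have hinner : inner ℝ (z - sstar) (c - sstar) ≤ v * (∑ i, c i - ∑ i, sstar i) := by
    simp only [PiLp.inner_apply, PiLp.sub_apply, RCLike.inner_apply', conj_trivial, hsstar]
    exact sum_sub_clip_mul_sub_clip_le z c hc
  rcases hopt with ⟨rfl, -⟩ | heq
  · simpa using hinner
  · have htight : ∑ i, sstar i = K := by simpa only [hsstar] using heq
    nlinarith

/-- Correctness of the bisection-based projection onto
`C_K = {s : 0 ≤ s_i ≤ 1, Σ_i s_i ≤ K}`: if `v* ≥ 0` satisfies the optimality condition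
(either `v* = 0` and the clipped vector is already feasible, or the clipped sum equals
`K`), then the vector `s*` with coordinates `s*_i = min(1, max(0, z_i − v*))` is the
Euclidean projection of `z` onto `C_K`. -/
theorem projection_onto_capped_simplex
    (n : ℕ) (K : ℝ) (hK : 0 < K) (z : EuclideanSpace ℝ (Fin n)) (v : ℝ) (hv : 0 ≤ v)
    (hopt : (v = 0 ∧ ∑ i, min 1 (max 0 (z i)) ≤ K)
        ∨ ∑ i, min 1 (max 0 (z i - v)) = K)
    (sstar : EuclideanSpace ℝ (Fin n))
    (hsstar : ∀ i, sstar i = min 1 (max 0 (z i - v))) :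
    (sstar ∈ {s : EuclideanSpace ℝ (Fin n) | (∀ i, 0 ≤ s i ∧ s i ≤ 1) ∧ ∑ i, s i ≤ K}) ∧
      ∀ c ∈ {s : EuclideanSpace ℝ (Fin n) | (∀ i, 0 ≤ s i ∧ s i ≤ 1) ∧ ∑ i, s i ≤ K},
        ‖z - sstar‖ ≤ ‖z - c‖ :=
  projection_onto_capped_simplex_general n K z v hv hopt sstar hsstar
end
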